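/- arXiv:2003.06636 — 5 statements merged into one kernel-verified Lean document; each statement's English description precedes it below -/
import Mathlib

section
/- Let G, G', H be topological groups with H connected, and let α : G' → G be a group homomorphism whose kernel is discrete. If ψ : H → G' is a continuous map with ψ(1) = 1 and α ∘ ψ a group homomorphism, then ψ is itself a group homomorphism. -/
/-! The defect `(a, b) ↦ ψ (a * b) * (ψ a * ψ b)⁻¹` is a continuous map from the connected
space `H × H` into the discrete set `α.ker`, hence constant; its value at `(1, 1)` is `1`. -/

theorem map_mul_of_continuous_of_mul_defect_mem {H M : Type*}
    [MulOneClass H] [TopologicalSpace H] [ContinuousMul H] [PreconnectedSpace H]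
    [Group M] [TopologicalSpace M] [IsTopologicalGroup M] {S : Set M} (hS : IsDiscrete S)
    {ψ : H → M} (hψc : Continuous ψ) (hψ1 : ψ 1 = 1)
    (hdefect : ∀ a b : H, ψ (a * b) * (ψ a * ψ b)⁻¹ ∈ S) (a b : H) :
    ψ (a * b) = ψ a * ψ b := by
  have hconst : ψ (a * b) * (ψ a * ψ b)⁻¹ = ψ (1 * 1) * (ψ 1 * ψ 1)⁻¹ :=
    isPreconnected_univ.constant_of_mapsTo
      (f := fun p : H × H ↦ ψ (p.1 * p.2) * (ψ p.1 * ψ p.2)⁻¹) hS (by fun_prop)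
      (fun p _ ↦ hdefect p.1 p.2) (Set.mem_univ (a, b)) (Set.mem_univ (1, 1))
  rw [mul_one, hψ1, mul_one, inv_one, mul_one] at hconst
  exact mul_inv_eq_one.mp hconst

theorem stmt1_general {G G' H : Type*}
    [Group G]
    [Group G'] [TopologicalSpace G'] [IsTopologicalGroup G']
    [Group H] [TopologicalSpace H] [IsTopologicalGroup H] [ConnectedSpace H]
    (α : G' →* G) (hker : DiscreteTopology α.ker)
    (ψ : H → G') (hψc : Continuous ψ) (hψ1 : ψ 1 = 1)
    (hcomp : ∀ a b : H, α (ψ (a * b)) = α (ψ a) * α (ψ b)) :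
    ∀ a b : H, ψ (a * b) = ψ a * ψ b :=
  map_mul_of_continuous_of_mul_defect_mem (isDiscrete_iff_discreteTopology.mpr hker) hψc hψ1
    fun a b ↦ by simp [MonoidHom.mem_ker, hcomp]

theorem stmt1 {G G' H : Type*}
    [Group G] [TopologicalSpace G] [IsTopologicalGroup G]
    [Group G'] [TopologicalSpace G'] [IsTopologicalGroup G']
    [Group H] [TopologicalSpace H] [IsTopologicalGroup H] [ConnectedSpace H]
    (α : G' →* G) (hαc : Continuous α) (hker : DiscreteTopology α.ker)
    (ψ : H → G') (hψc : Continuous ψ) (hψ1 : ψ 1 = 1)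
    (hcomp : ∀ a b : H, α (ψ (a * b)) = α (ψ a) * α (ψ b)) :
    ∀ a b : H, ψ (a * b) = ψ a * ψ b :=
  stmt1_general α hker ψ hψc hψ1 hcomp
end

section
/- Let G be a topological group, G⁰ its identity component, and H a subgroup with G = G⁰ · H. Let ρ : P → Q be a double cover of topological groups (continuous surjective homomorphism with kernel of order 2) and π : G → Q a continuous homomorphism. Suppose π|_{G⁰} lifts to a continuous homomorphism π̂₁ : G⁰ → P and π|_H lifts to a continuous homomorphism π̂₂ : H → P, and π̂₁ and π̂₂ agree on G⁰ ∩ H. Then π lifts to a continuous homomorphism π̂ : G → P with ρ ∘ π̂ = π. -/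
/-!
A lift on `G⁰` and a lift on `H` glue to a homomorphism on `G = (G⁰ ⋊ H) / (G⁰ ∩ H)` as soon
as `π̂₁ (h a h⁻¹) = π̂₂ h · π̂₁ a · π̂₂ h⁻¹`. Both sides of that identity are continuous lifts of
the same map on the connected group `G⁰`, so their quotient is a continuous map into the
discrete kernel of `ρ` which is trivial at `1`, hence trivial. The glued lift is continuous
because it is so on the open subgroup `G⁰`.
-/

section Topology

variable {G P : Type*} [Group G] [TopologicalSpace G] [IsTopologicalGroup G]

theorem MulAut.continuous_conjNormal {N : Subgroup G} [N.Normal] (g : G) :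
    Continuous (MulAut.conjNormal g : N ≃* N) := by
  simp_rw [continuous_induced_rng, Function.comp_def, MulAut.conjNormal_apply]
  fun_prop

theorem MonoidHom.continuous_of_continuous_comp_subtype [Monoid P] [TopologicalSpace P]
    [ContinuousMul P] {N : Subgroup G} (hN : IsOpen (N : Set G)) (f : G →* P)
    (hf : Continuous (f.comp N.subtype)) : Continuous f := by
  refine continuous_of_continuousAt_one f (ContinuousOn.continuousAt ?_ (hN.mem_nhds N.one_mem))
  exact continuousOn_iff_continuous_domRestrict.mpr hf

end Topology

theorem MonoidHom.eq_of_comp_eq_of_preconnectedSpace {K P Q : Type*} [MulOneClass K]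
    [TopologicalSpace K] [PreconnectedSpace K] [Group P] [TopologicalSpace P]
    [IsTopologicalGroup P] [Group Q] {ρ : P →* Q} [DiscreteTopology ρ.ker] {φ ψ : K →* P}
    (hφ : Continuous φ) (hψ : Continuous ψ) (h : ρ.comp φ = ρ.comp ψ) : φ = ψ := by
  let δ : K → ρ.ker := fun x => ⟨φ x * (ψ x)⁻¹, by
    rw [MonoidHom.mem_ker, map_mul, map_inv, mul_inv_eq_one]
    exact DFunLike.congr_fun h x⟩
  have hδ : Continuous δ := (hφ.mul hψ.inv).subtype_mk _
  ext x
  have : δ x = δ 1 := PreconnectedSpace.constant ‹_› hδ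
  simpa [δ, mul_inv_eq_one] using congrArg Subtype.val this

open SemidirectProduct

section Glue

variable {G P : Type*} [Group G] [Group P] {N H : Subgroup G} [N.Normal]

variable (N H) in
def Subgroup.semidirectProductMul : N ⋊[MulAut.conjNormal.comp H.subtype] H →* G :=
  lift N.subtype H.subtype fun h => by ext a; simp [MulAut.conjNormal_apply]

@[simp]
theorem Subgroup.semidirectProductMul_apply (x : N ⋊[MulAut.conjNormal.comp H.subtype] H) :
    N.semidirectProductMul H x = x.left * x.right :=
  rfl

theorem Subgroup.semidirectProductMul_surjective
    (hNH : ∀ g : G, ∃ a ∈ N, ∃ h ∈ H, g = a * h) :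
    Function.Surjective (N.semidirectProductMul H) := by
  intro g
  obtain ⟨a, ha, h, hh, rfl⟩ := hNH g
  exact ⟨⟨⟨a, ha⟩, ⟨h, hh⟩⟩, rfl⟩

theorem Subgroup.exists_monoidHom_comp_subtype_eq (hNH : ∀ g : G, ∃ a ∈ N, ∃ h ∈ H, g = a * h)
    (φ : N →* P) (ψ : H →* P)
    (hagree : ∀ (g : G) (hN : g ∈ N) (hH : g ∈ H), φ ⟨g, hN⟩ = ψ ⟨g, hH⟩)
    (hconj : ∀ (h : H) (a : N), φ (MulAut.conjNormal (h : G) a) = ψ h * φ a * (ψ h)⁻¹) :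
    ∃ f : G →* P, f.comp N.subtype = φ ∧ f.comp H.subtype = ψ := by
  set χ : N ⋊[MulAut.conjNormal.comp H.subtype] H →* P :=
    lift φ ψ fun h => MonoidHom.ext (hconj h)
  have hker : (N.semidirectProductMul H).ker ≤ χ.ker := by
    intro x (hx : (x.left : G) * x.right = 1)
    have hH : (x.left : G) ∈ H := eq_inv_of_mul_eq_one_left hx ▸ H.inv_mem x.right.2
    have : φ x.left = ψ x.right⁻¹ := by
      rw [hagree _ x.left.2 hH]; congr; exact eq_inv_of_mul_eq_one_left hx
    show φ x.left * ψ x.right = 1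
    rw [this, map_inv, inv_mul_cancel]
  set f := (N.semidirectProductMul H).liftOfSurjective
    (Subgroup.semidirectProductMul_surjective hNH) ⟨χ, hker⟩
  have hf : ∀ x, f (N.semidirectProductMul H x) = χ x :=
    (N.semidirectProductMul H).liftOfRightInverse_comp_apply _ _ ⟨χ, hker⟩
  refine ⟨f, ?_, ?_⟩
  · ext a
    simpa [χ] using hf (inl a)
  · ext h
    simpa [χ] using hf (inr h)

end Glue

theorem stmt2_general {G P Q : Type*}
    [Group G] [TopologicalSpace G] [IsTopologicalGroup G]
    [Group P] [TopologicalSpace P] [IsTopologicalGroup P]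
    [Group Q]
    (G0 : Subgroup G) [G0.Normal]
    (hG0 : (G0 : Set G) = connectedComponent (1 : G))
    (hopen : IsOpen (G0 : Set G))
    (H : Subgroup G) (hGH : ∀ g : G, ∃ a ∈ G0, ∃ h ∈ H, g = a * h)
    (ρ : P →* Q)
    (hkerd : DiscreteTopology ρ.ker)
    (π : G →* Q)
    (π₁ : G0 →* P) (hπ₁c : Continuous π₁) (hπ₁ : ∀ x : G0, ρ (π₁ x) = π x)
    (π₂ : H →* P) (hπ₂ : ∀ x : H, ρ (π₂ x) = π x)
    (hagree : ∀ (g : G) (h1 : g ∈ G0) (h2 : g ∈ H), π₁ ⟨g, h1⟩ = π₂ ⟨g, h2⟩) :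
    ∃ πh : G →* P, Continuous πh ∧ ∀ g : G, ρ (πh g) = π g := by
  have : PreconnectedSpace G0 :=
    isPreconnected_iff_preconnectedSpace.mp (hG0 ▸ isPreconnected_connectedComponent)
  have hconj (h : H) (a : G0) : π₁ (MulAut.conjNormal (h : G) a) = π₂ h * π₁ a * (π₂ h)⁻¹ := by
    refine DFunLike.congr_fun (MonoidHom.eq_of_comp_eq_of_preconnectedSpace (ρ := ρ)
      (φ := π₁.comp (MulAut.conjNormal (h : G)).toMonoidHom)
      (ψ := (MulAut.conj (π₂ h)).toMonoidHom.comp π₁)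
      (hπ₁c.comp (MulAut.continuous_conjNormal _))
      ((continuous_const.mul hπ₁c).mul continuous_const) ?_) a
    ext b
    simp [hπ₁, hπ₂, MulAut.conjNormal_apply]
  obtain ⟨πh, hπh₁, hπh₂⟩ := Subgroup.exists_monoidHom_comp_subtype_eq hGH π₁ π₂ hagree hconj
  refine ⟨πh, πh.continuous_of_continuous_comp_subtype hopen (hπh₁ ▸ hπ₁c), fun g => ?_⟩
  obtain ⟨a, ha, h, hh, rfl⟩ := hGH g
  rw [map_mul, map_mul, map_mul, ← hπ₁ ⟨a, ha⟩, ← hπ₂ ⟨h, hh⟩, ← hπh₁, ← hπh₂]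
  rfl

theorem stmt2 {G P Q : Type*}
    [Group G] [TopologicalSpace G] [IsTopologicalGroup G]
    [Group P] [TopologicalSpace P] [IsTopologicalGroup P]
    [Group Q] [TopologicalSpace Q] [IsTopologicalGroup Q]
    (G0 : Subgroup G) [G0.Normal]
    (hG0 : (G0 : Set G) = connectedComponent (1 : G))
    (hopen : IsOpen (G0 : Set G))
    (H : Subgroup G) (hGH : ∀ g : G, ∃ a ∈ G0, ∃ h ∈ H, g = a * h)
    (ρ : P →* Q) (hρc : Continuous ρ) (hρs : Function.Surjective ρ)
    (hker : Nat.card ρ.ker = 2) (hkerd : DiscreteTopology ρ.ker)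
    (π : G →* Q) (hπc : Continuous π)
    (π₁ : G0 →* P) (hπ₁c : Continuous π₁) (hπ₁ : ∀ x : G0, ρ (π₁ x) = π x)
    (π₂ : H →* P) (hπ₂c : Continuous π₂) (hπ₂ : ∀ x : H, ρ (π₂ x) = π x)
    (hagree : ∀ (g : G) (h1 : g ∈ G0) (h2 : g ∈ H), π₁ ⟨g, h1⟩ = π₂ ⟨g, h2⟩) :
    ∃ πh : G →* P, Continuous πh ∧ ∀ g : G, ρ (πh g) = π g :=
  stmt2_general G0 hG0 hopen H hGH ρ hkerd π π₁ hπ₁c hπ₁ π₂ hπ₂ hagree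
end

section
/- Let G = G₁ ⋊ G₂ be a semidirect product of topological groups where G₁ is connected and G₂ is discrete. Let ρ : P → Q be a double cover of topological groups and π : G → Q a continuous homomorphism. Then π lifts to a continuous homomorphism G → P if and only if π|_{G₁} and π|_{G₂} each lift to continuous homomorphisms into P. -/
open SemidirectProduct

section
variable {G₁ G₂ : Type*} [Group G₁] [TopologicalSpace G₁] [Group G₂]
  [TopologicalSpace G₂] (φ : G₂ →* MulAut G₁)

/-- The product topology on the semidirect product `G₁ ⋊[φ] G₂`. -/
instance sdpTopology : TopologicalSpace (G₁ ⋊[φ] G₂) :=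
  TopologicalSpace.induced (fun g => (g.left, g.right)) inferInstance

/-! Two continuous lifts of the same homomorphism out of a connected group differ by a continuous
map into the discrete kernel of `ρ`, hence by a constant, which is `1` at the identity. Since
`f ∘ φ b` and `conj (g b) ∘ f` both lift `π ∘ inl ∘ φ b`, lifts `f` on `G₁` and `g` on `G₂`
therefore satisfy the compatibility condition of `SemidirectProduct.lift` and glue to a lift on
`G₁ ⋊[φ] G₂`. -/

theorem MonoidHom.eq_of_comp_eq_of_discreteTopology_ker {H P Q : Type*} [Group H]
    [TopologicalSpace H] [PreconnectedSpace H] [Group P] [TopologicalSpace P]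
    [IsTopologicalGroup P] [Group Q] (ρ : P →* Q) [DiscreteTopology ρ.ker] {α β : H →* P}
    (hα : Continuous α) (hβ : Continuous β) (h : ρ.comp α = ρ.comp β) : α = β := by
  have mem_ker (x : H) : α x * (β x)⁻¹ ∈ ρ.ker := by
    have hx : ρ (α x) = ρ (β x) := DFunLike.congr_fun h x
    simp [MonoidHom.mem_ker, hx]
  let c : H → ρ.ker := fun x => ⟨α x * (β x)⁻¹, mem_ker x⟩
  have hc : Continuous c := (hα.mul hβ.inv).subtype_mk mem_ker
  ext x
  have hcx : c x = c 1 := PreconnectedSpace.constant inferInstance hc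
  simpa [c, mul_inv_eq_one] using congrArg Subtype.val hcx

namespace SemidirectProduct

variable {φ}

theorem continuous_left_right : Continuous fun x : G₁ ⋊[φ] G₂ => (x.left, x.right) :=
  continuous_induced_dom

theorem continuous_left : Continuous fun x : G₁ ⋊[φ] G₂ => x.left :=
  continuous_fst.comp continuous_left_right

theorem continuous_right : Continuous fun x : G₁ ⋊[φ] G₂ => x.right :=
  continuous_snd.comp continuous_left_right

theorem continuous_inl : Continuous (inl : G₁ →* G₁ ⋊[φ] G₂) :=
  continuous_induced_rng.mpr (continuous_id.prodMk continuous_const)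

theorem continuous_inr : Continuous (inr : G₂ →* G₁ ⋊[φ] G₂) :=
  continuous_induced_rng.mpr (continuous_const.prodMk continuous_id)

theorem continuous_lift {P : Type*} [Group P] [TopologicalSpace P] [ContinuousMul P]
    {f : G₁ →* P} {g : G₂ →* P}
    (h : ∀ b, f.comp (φ b).toMonoidHom = (MulAut.conj (g b)).toMonoidHom.comp f)
    (hf : Continuous f) (hg : Continuous g) : Continuous (lift f g h) :=
  (hf.comp continuous_left).mul (hg.comp continuous_right)

theorem lift_compatible_of_discreteTopology_ker {N G : Type*} [Group N] [TopologicalSpace N]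
    [PreconnectedSpace N] [Group G] {ψ : G →* MulAut N} (hψ : ∀ b : G, Continuous (ψ b))
    {P Q : Type*} [Group P] [TopologicalSpace P] [IsTopologicalGroup P] [Group Q] (ρ : P →* Q)
    [DiscreteTopology ρ.ker] (π : N ⋊[ψ] G →* Q) {f : N →* P} {g : G →* P} (hfc : Continuous f)
    (hf : ρ.comp f = π.comp inl) (hg : ρ.comp g = π.comp inr) (b : G) :
    f.comp (ψ b).toMonoidHom = (MulAut.conj (g b)).toMonoidHom.comp f := by
  refine MonoidHom.eq_of_comp_eq_of_discreteTopology_ker ρ (hfc.comp (hψ b))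
    ((continuous_const.mul hfc).mul continuous_const) ?_
  ext a
  have hfa (a : N) : ρ (f a) = π (inl a) := DFunLike.congr_fun hf a
  have hgb : ρ (g b) = π (inr b) := DFunLike.congr_fun hg b
  simp [hfa, hgb, inl_aut]

end SemidirectProduct

theorem stmt3 {P Q : Type*}
    [ConnectedSpace G₁]
    (hφ : ∀ g : G₂, Continuous (φ g))
    [Group P] [TopologicalSpace P] [IsTopologicalGroup P]
    [Group Q]
    (ρ : P →* Q)
    (hkerd : DiscreteTopology ρ.ker)
    (π : G₁ ⋊[φ] G₂ →* Q) :
    (∃ πh : G₁ ⋊[φ] G₂ →* P, Continuous πh ∧ ρ.comp πh = π) ↔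
      ((∃ f : G₁ →* P, Continuous f ∧ ρ.comp f = π.comp inl) ∧
        (∃ g : G₂ →* P, Continuous g ∧ ρ.comp g = π.comp inr)) := by
  constructor
  · rintro ⟨πh, hc, rfl⟩
    exact ⟨⟨πh.comp inl, hc.comp continuous_inl, rfl⟩,
      ⟨πh.comp inr, hc.comp continuous_inr, rfl⟩⟩
  · rintro ⟨⟨f, hfc, hf⟩, ⟨g, hgc, hg⟩⟩
    have hcompat := lift_compatible_of_discreteTopology_ker hφ ρ π hfc hf hg
    refine ⟨lift f g hcompat, continuous_lift hcompat hfc hgc, hom_ext ?_ ?_⟩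
    · rw [MonoidHom.comp_assoc, lift_comp_inl, hf]
    · rw [MonoidHom.comp_assoc, lift_comp_inr, hg]
end
end

section
/- Let π be the real representation of C₂ = {±1} on ℝⁿ given by m copies of the sign character and n − m copies of the trivial character. Then π lifts through the double cover Pin(n) → O(n) (i.e., there is a homomorphism C₂ → Pin(n) covering π) if and only if m ≡ 0 or 3 (mod 4). -/
/-! The basis vectors `eᵢ` satisfy `eᵢ² = Q eᵢ = -1` and pairwise anticommute. Peeling off the
first factor of `e₁⋯e_m` and moving it past the remaining `k` factors costs `(-1)^k`, so
`(e₁⋯e_m)² = (-1)^(1 + 2 + ⋯ + m) = (-1)^((m+1).choose 2)`, and `m(m+1)/2` is even exactly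
when `m ≡ 0, 3 (mod 4)`. Since `ℝ` embeds in the Clifford algebra, `-1 ≠ 1` there. -/

section Anticommute

variable {A : Type*} [Ring A]

lemma mul_list_prod_of_anticommute (x : A) (l : List A) (h : ∀ y ∈ l, x * y = -(y * x)) :
    x * l.prod = (-1) ^ l.length * (l.prod * x) := by
  induction l with
  | nil => simp
  | cons a t ih =>
    have ht := ih fun y hy => h y (List.mem_cons_of_mem a hy)
    calc x * (a :: t).prod = -(a * (x * t.prod)) := by
          rw [List.prod_cons, ← mul_assoc, h a List.mem_cons_self, neg_mul, mul_assoc]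
      _ = (-1) ^ (a :: t).length * ((a :: t).prod * x) := by
          rw [ht, ← mul_assoc a, ← ((Commute.neg_one_left a).pow_left t.length).eq,
            List.prod_cons, List.length_cons, pow_succ, mul_neg_one, neg_mul]
          simp only [mul_assoc]

lemma list_prod_sq_of_anticommute (l : List A) (hsq : ∀ x ∈ l, x * x = -1)
    (hanti : l.Pairwise fun x y => x * y = -(y * x)) :
    l.prod ^ 2 = (-1) ^ (l.length + 1).choose 2 := by
  induction l with
  | nil => simp
  | cons a t ih =>
    rw [List.pairwise_cons] at hanti
    have ha := hsq a List.mem_cons_self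
    have hT := ih (fun x hx => hsq x (List.mem_cons_of_mem a hx)) hanti.2
    have hcomm := mul_list_prod_of_anticommute a t hanti.1
    calc (a :: t).prod ^ 2 = a * t.prod * (a * t.prod) := by rw [List.prod_cons, sq]
      _ = (-1) ^ t.length * (t.prod * (a * a) * t.prod) := by
          nth_rw 1 [hcomm]; simp only [mul_assoc]
      _ = (-1) ^ (t.length + 1) * t.prod ^ 2 := by
          rw [ha, pow_succ, sq]; simp only [mul_neg, neg_mul, mul_one]
      _ = (-1) ^ ((a :: t).length + 1).choose 2 := by
          rw [hT, ← pow_add, List.length_cons, Nat.choose_succ_succ' (t.length + 1),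
            Nat.choose_one_right, add_comm]

end Anticommute

lemma even_choose_two_succ_iff (m : ℕ) : Even ((m + 1).choose 2) ↔ m % 4 = 0 ∨ m % 4 = 3 := by
  induction m using Nat.strongRecOn with
  | ind m ih =>
    match m, ih with
    | 0, _ | 1, _ | 2, _ | 3, _ => decide
    | k + 4, ih =>
      have h : (k + 4 + 1).choose 2 = (k + 1).choose 2 + 2 * (2 * k + 5) := by
        simp only [Nat.choose_succ_succ' _ 1, Nat.choose_one_right]; ring
      rw [h, Nat.even_add, ih k (by omega)]
      simp only [even_two_mul, iff_true]; omega

section StandardBasis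

variable {n : ℕ} {Q : QuadraticForm ℝ (Fin n → ℝ)}

lemma isOrtho_iff_sum_mul_eq_zero (hQ : ∀ x, Q x = -∑ i, x i ^ 2) {x y : Fin n → ℝ} :
    Q.IsOrtho x y ↔ ∑ i, x i * y i = 0 := by
  rw [QuadraticMap.IsOrtho, hQ, hQ, hQ]
  simp only [Pi.add_apply, add_sq, mul_assoc, Finset.sum_add_distrib, ← Finset.mul_sum]
  constructor <;> intro h <;> linarith

lemma ι_single_mul_self (hQ : ∀ x, Q x = -∑ i, x i ^ 2) (j : Fin n) :
    CliffordAlgebra.ι Q (Pi.single j 1) * CliffordAlgebra.ι Q (Pi.single j 1) = -1 := by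
  rw [CliffordAlgebra.ι_sq_scalar, hQ]
  simp [Pi.single_apply]

lemma ι_single_anticommute (hQ : ∀ x, Q x = -∑ i, x i ^ 2) {j k : Fin n} (hjk : j ≠ k) :
    CliffordAlgebra.ι Q (Pi.single j 1) * CliffordAlgebra.ι Q (Pi.single k 1) =
      -(CliffordAlgebra.ι Q (Pi.single k 1) * CliffordAlgebra.ι Q (Pi.single j 1)) := by
  refine CliffordAlgebra.ι_mul_ι_comm_of_isOrtho ((isOrtho_iff_sum_mul_eq_zero hQ).2 ?_)
  simp [Pi.single_apply, hjk.symm]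

end StandardBasis

theorem stmt4 (n m : ℕ) (hm : m ≤ n)
    (Q : QuadraticForm ℝ (Fin n → ℝ)) (hQ : ∀ x, Q x = -∑ i, (x i) ^ 2) :
    (List.ofFn (fun i : Fin m =>
        CliffordAlgebra.ι Q (Pi.single (Fin.castLE hm i) (1 : ℝ)))).prod ^ 2 = 1 ↔
      (m % 4 = 0 ∨ m % 4 = 3) := by
  have hne : (-1 : CliffordAlgebra Q) ≠ 1 := by
    simpa using (algebraMap ℝ (CliffordAlgebra Q)).injective.ne (by norm_num : (-1 : ℝ) ≠ 1)
  rw [list_prod_sq_of_anticommute _ ?sq ?anti, List.length_ofFn, neg_one_pow_eq_one_iff_even hne,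
    even_choose_two_succ_iff]
  case sq =>
    simp only [List.mem_ofFn, forall_exists_index, forall_apply_eq_imp_iff]
    exact fun i => ι_single_mul_self hQ _
  case anti =>
    exact List.pairwise_ofFn.2 fun i j hij =>
      ι_single_anticommute hQ ((Fin.castLE_injective hm).ne hij.ne)
end

section
/- Let g₀ ∈ O(m) be any involution of the form diag(−1,…,−1,1,…,1) up to conjugacy, with X ↦ g₀Xg₀⁻¹ the adjoint action on skew-symmetric matrices. For g₀ the coordinate swap on the last two coordinates of ℝ^{2n}: the conjugation action Ad(g₀) on so(2n) has exactly 2n−1 eigenvalues equal to −1, and 2n−1 ≡ 3 (mod 4) if and only if n ≡ 0 (mod 2). Consequently the adjoint representation of O(2n) lifts to Pin if and only if 2n ≡ 0 (mod 4), given that Ad restricted to SO(2n) is spinorial. -/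
/-!
The swap of two coordinates `a ≠ b` is the reflection `R = 1 - d dᵀ` in `d = e_a - e_b`
(note `dᵀd = 2`). Expanding `R X R = -X` for a skew matrix `X` and using `dᵀ X d = 0` gives
`2 X = u dᵀ - d uᵀ` with `u = X d`, and `u ⊥ d`; conversely every `u dᵀ - d uᵀ` with `u ⊥ d`
is skew and anti-invariant. Hence the `(-1)`-eigenspace of `Ad R` on `so(m)` is isomorphic to
the hyperplane `d⊥`, of dimension `m - 1` (in representation-theoretic terms, it is
`V₊ ⊗ V₋ ⊆ Λ²(V₊ ⊕ V₋)` with `dim V₋ = 1`). The remaining claims are arithmetic modulo 4.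
-/

open Matrix Module

def wedgeMatrix {K ι : Type*} [CommRing K] (u v : ι → K) : Matrix ι ι K :=
  vecMulVec u v - vecMulVec v u

section CommRing

variable {K ι : Type*} [CommRing K]

lemma wedgeMatrix_add_left (u₁ u₂ v : ι → K) :
    wedgeMatrix (u₁ + u₂) v = wedgeMatrix u₁ v + wedgeMatrix u₂ v := by
  simp only [wedgeMatrix, add_vecMulVec, vecMulVec_add]
  abel

lemma wedgeMatrix_smul_left (c : K) (u v : ι → K) :
    wedgeMatrix (c • u) v = c • wedgeMatrix u v := by
  simp only [wedgeMatrix, smul_vecMulVec, vecMulVec_smul, smul_sub]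

lemma transpose_wedgeMatrix (u v : ι → K) : (wedgeMatrix u v)ᵀ = -wedgeMatrix u v := by
  simp [wedgeMatrix, transpose_vecMulVec]

variable [Fintype ι]

lemma mul_wedgeMatrix_mul_transpose (M : Matrix ι ι K) (u v : ι → K) :
    M * wedgeMatrix u v * Mᵀ = wedgeMatrix (M *ᵥ u) (M *ᵥ v) := by
  simp only [wedgeMatrix, Matrix.mul_sub, Matrix.sub_mul, mul_vecMulVec, vecMulVec_mul,
    vecMul_transpose]

lemma wedgeMatrix_mulVec {u d : ι → K} (hd : d ⬝ᵥ d = 2) (hu : u ⬝ᵥ d = 0) :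
    wedgeMatrix u d *ᵥ d = (2 : K) • u := by
  rw [wedgeMatrix, sub_mulVec, vecMulVec_mulVec, vecMulVec_mulVec, op_smul_eq_smul,
    op_smul_eq_smul, hd, hu, zero_smul, sub_zero]

variable [DecidableEq ι]

lemma one_sub_vecMulVec_mulVec (d v : ι → K) :
    (1 - vecMulVec d d) *ᵥ v = v - (d ⬝ᵥ v) • d := by
  simp [sub_mulVec, vecMulVec_mulVec, op_smul_eq_smul]

lemma conj_wedgeMatrix {u d : ι → K} (hd : d ⬝ᵥ d = 2) (hu : u ⬝ᵥ d = 0) :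
    (1 - vecMulVec d d) * wedgeMatrix u d * (1 - vecMulVec d d) = -wedgeMatrix u d := by
  have hRu : (1 - vecMulVec d d) *ᵥ u = u := by
    rw [one_sub_vecMulVec_mulVec, dotProduct_comm, hu, zero_smul, sub_zero]
  have hRd : (1 - vecMulVec d d) *ᵥ d = -d := by
    rw [one_sub_vecMulVec_mulVec, hd, two_smul, sub_add_cancel_left]
  have hR : (1 - vecMulVec d d)ᵀ = 1 - vecMulVec d d := by
    rw [transpose_sub, transpose_one, transpose_vecMulVec]
  nth_rewrite 2 [← hR]
  rw [mul_wedgeMatrix_mul_transpose, hRu, hRd, wedgeMatrix, wedgeMatrix, vecMulVec_neg,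
    neg_vecMulVec, sub_neg_eq_add, neg_sub, neg_add_eq_sub]

end CommRing

section Field

variable {K ι : Type*} [Field K] [NeZero (2 : K)] [Fintype ι]

lemma dotProduct_mulVec_self_of_transpose_eq_neg {X : Matrix ι ι K} (hX : Xᵀ = -X)
    (v : ι → K) : v ⬝ᵥ X *ᵥ v = 0 := by
  have h : v ⬝ᵥ X *ᵥ v = -(v ⬝ᵥ X *ᵥ v) := by
    conv_lhs => rw [dotProduct_mulVec, ← mulVec_transpose, hX, dotProduct_comm]
    simp [neg_mulVec]
  have h2 : (2 : K) * (v ⬝ᵥ X *ᵥ v) = 0 := by linear_combination h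
  exact (mul_eq_zero.1 h2).resolve_left two_ne_zero

variable [DecidableEq ι]

lemma wedgeMatrix_mulVec_eq_two_smul {X : Matrix ι ι K} {d : ι → K} (hX : Xᵀ = -X)
    (hXd : (1 - vecMulVec d d) * X * (1 - vecMulVec d d) = -X) :
    wedgeMatrix (X *ᵥ d) d = (2 : K) • X := by
  have hdX : d ᵥ* X = -(X *ᵥ d) := by rw [← mulVec_transpose, hX, neg_mulVec]
  have hDX : vecMulVec d d * X = -vecMulVec d (X *ᵥ d) := by
    rw [vecMulVec_mul, hdX, vecMulVec_neg]
  have hDXD : vecMulVec d d * X * vecMulVec d d = 0 := by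
    rw [hDX, Matrix.neg_mul, vecMulVec_mul_vecMulVec, dotProduct_comm,
      dotProduct_mulVec_self_of_transpose_eq_neg hX, zero_smul, vecMulVec_zero, neg_zero]
  have hexpand : (1 - vecMulVec d d) * X * (1 - vecMulVec d d) =
      X - vecMulVec d d * X - X * vecMulVec d d + vecMulVec d d * X * vecMulVec d d := by
    noncomm_ring
  rw [hexpand, hDXD, hDX, mul_vecMulVec] at hXd
  calc wedgeMatrix (X *ᵥ d) d
      = X - (X - -vecMulVec d (X *ᵥ d) - vecMulVec (X *ᵥ d) d + 0) := by
        rw [wedgeMatrix]; abel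
    _ = (2 : K) • X := by rw [hXd, sub_neg_eq_add, two_smul]

theorem finrank_eigenspace_neg_one_conj_one_sub_vecMulVec {d : ι → K} (hd : d ⬝ᵥ d = 2)
    (W : Submodule K (Matrix ι ι K)) (hW : ∀ X, X ∈ W ↔ Xᵀ = -X) (Ad : Module.End K W)
    (hAd : ∀ X : W, (Ad X : Matrix ι ι K) = (1 - vecMulVec d d) * X * (1 - vecMulVec d d)) :
    finrank K (End.eigenspace Ad (-1)) + 1 = Fintype.card ι := by
  have mem_eigenspace (X : W) : X ∈ End.eigenspace Ad (-1) ↔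
      (1 - vecMulVec d d) * X * (1 - vecMulVec d d) = -(X : Matrix ι ι K) := by
    rw [End.mem_eigenspace_iff, neg_one_smul, Subtype.ext_iff, Submodule.coe_neg, hAd]
  let f : Dual K (ι → K) := dotProductBilin K K d
  have hf : f ≠ 0 := fun h => by simpa [f, hd, two_ne_zero] using LinearMap.congr_fun h d
  have mem_ker (u : ι → K) : u ∈ LinearMap.ker f ↔ u ⬝ᵥ d = 0 := by
    simp [f, dotProduct_comm]
  let Ψ : LinearMap.ker f →ₗ[K] End.eigenspace Ad (-1) :=
    { toFun u := ⟨⟨wedgeMatrix u d, (hW _).2 (transpose_wedgeMatrix _ _)⟩,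
        (mem_eigenspace _).2 (conj_wedgeMatrix hd ((mem_ker _).1 u.2))⟩
      map_add' u v := by ext1; ext1; exact wedgeMatrix_add_left _ _ _
      map_smul' c u := by ext1; ext1; exact wedgeMatrix_smul_left _ _ _ }
  have hΨ : Function.Bijective Ψ := by
    constructor
    · intro u v huv
      have h := congrArg (fun X : End.eigenspace Ad (-1) => (X : Matrix ι ι K) *ᵥ d) huv
      simp only [Ψ, LinearMap.coe_mk, AddHom.coe_mk] at h
      rw [wedgeMatrix_mulVec hd ((mem_ker _).1 u.2),
        wedgeMatrix_mulVec hd ((mem_ker _).1 v.2)] at h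
      exact Subtype.ext (smul_right_injective _ two_ne_zero h)
    · rintro ⟨⟨X, hXW⟩, hX⟩
      have hskew := (hW X).1 hXW
      have hconj := (mem_eigenspace ⟨X, hXW⟩).1 hX
      refine ⟨⟨(2⁻¹ : K) • (X *ᵥ d), (mem_ker _).2 ?_⟩, ?_⟩
      · rw [smul_dotProduct, dotProduct_comm, dotProduct_mulVec_self_of_transpose_eq_neg hskew,
          smul_zero]
      · ext1; ext1
        change wedgeMatrix ((2⁻¹ : K) • (X *ᵥ d)) d = X
        rw [wedgeMatrix_smul_left, wedgeMatrix_mulVec_eq_two_smul hskew hconj, smul_smul,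
          inv_mul_cancel₀ (two_ne_zero' K), one_smul]
  rw [← (LinearEquiv.ofBijective Ψ hΨ).finrank_eq, Dual.finrank_ker_add_one_of_ne_zero hf,
    finrank_fintype_fun_eq_card]

end Field

section Swap

variable {R ι : Type*} [Ring R] [DecidableEq ι] {a b : ι}

lemma permMatrix_swap_eq_one_sub_vecMulVec (hab : a ≠ b) :
    (Equiv.swap a b).permMatrix R =
      1 - vecMulVec (Pi.single a 1 - Pi.single b 1) (Pi.single a 1 - Pi.single b 1) := by
  ext i j
  simp only [PEquiv.toMatrix_apply, Equiv.toPEquiv_apply, Option.mem_def, Option.some.injEq,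
    Matrix.sub_apply, one_apply, vecMulVec_apply, Pi.sub_apply, Pi.single_apply,
    Equiv.swap_apply_def]
  split_ifs <;> subst_vars <;> simp_all

lemma dotProduct_single_sub_single_self [Fintype ι] (hab : a ≠ b) :
    (Pi.single a 1 - Pi.single b 1 : ι → R) ⬝ᵥ (Pi.single a 1 - Pi.single b 1) = 2 := by
  simp [dotProduct_sub, hab, hab.symm, one_add_one_eq_two]

end Swap

theorem stmt11 (n : ℕ) (hn : 1 ≤ n)
    (g₀ : Matrix (Fin (2 * n)) (Fin (2 * n)) ℝ)
    (hg₀ : g₀ = (Equiv.swap (⟨2 * n - 2, by omega⟩ : Fin (2 * n))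
      ⟨2 * n - 1, by omega⟩).permMatrix ℝ)
    (W : Submodule ℝ (Matrix (Fin (2 * n)) (Fin (2 * n)) ℝ))
    (hW : ∀ X, X ∈ W ↔ X.transpose = -X)
    (Adg : Module.End ℝ W)
    (hAd : ∀ X : W, (Adg X : Matrix (Fin (2 * n)) (Fin (2 * n)) ℝ) = g₀ * X * g₀)
    (LiftsToPin : Prop)
    (hcrit : LiftsToPin ↔
      (finrank ℝ (Module.End.eigenspace Adg (-1)) % 4 = 0 ∨
        finrank ℝ (Module.End.eigenspace Adg (-1)) % 4 = 3)) :
    finrank ℝ (Module.End.eigenspace Adg (-1)) = 2 * n - 1 ∧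
      ((2 * n - 1) % 4 = 3 ↔ n % 2 = 0) ∧
      (LiftsToPin ↔ (2 * n) % 4 = 0) := by
  have hab : (⟨2 * n - 2, by omega⟩ : Fin (2 * n)) ≠ ⟨2 * n - 1, by omega⟩ := by
    simp only [ne_eq, Fin.mk.injEq]
    omega
  have hrank : finrank ℝ (End.eigenspace Adg (-1)) = 2 * n - 1 := by
    have h := finrank_eigenspace_neg_one_conj_one_sub_vecMulVec
      (dotProduct_single_sub_single_self (R := ℝ) hab) W hW Adg
      (fun X => by rw [hAd, hg₀, permMatrix_swap_eq_one_sub_vecMulVec hab])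
    rw [Fintype.card_fin] at h
    omega
  refine ⟨hrank, by omega, ?_⟩
  rw [hcrit, hrank]
  omega
end
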